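/- arXiv:0710.3744 — 3 statements merged into one kernel-verified Lean document; each statement's English description precedes it below -/
import Mathlib

section
/- Let R be a commutative ring, H a bialgebra over R, β ∈ H a primitive element, and f : H → R an R-linear ε-derivation. Let U : H → H be left multiplication by β, i.e. U(x) = βx, and let D : H → H be the down operator associated to f, i.e. D(x) = Σ f(x⁽¹⁾) x⁽²⁾. Then D ∘ U − U ∘ D = f(β) · id_H as R-linear endomorphisms of H. -/
open TensorProduct

/-!
The down operator `D` of an ε-derivation `f` is itself a derivation of `H`: expanding
`Δ(xy) = Δ(x) Δ(y)` and applying the ε-derivation rule in the left tensor factor gives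
`D(xy) = D(x) y + x D(y)`, the counit terms collapsing by the counit axiom. For primitive `β`,
`D(β) = f(1) β + f(β) 1 = f(β) 1`, so `D(βx) = f(β) x + β D(x)`.
-/

section CounitDerivation

variable {R : Type*} [CommSemiring R]

def IsCounitDerivation {H : Type*} [Semiring H] [Bialgebra R H] (f : H →ₗ[R] R) : Prop :=
  ∀ x y : H, f (x * y) = f x * Coalgebra.counit (R := R) y + Coalgebra.counit (R := R) x * f y

theorem lid_rTensor_mul {A : Type*} [Semiring A] [Algebra R A] {f e : A →ₗ[R] R}
    (hf : ∀ x y : A, f (x * y) = f x * e y + e x * f y) (t s : A ⊗[R] A) :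
    TensorProduct.lid R A (f.rTensor A (t * s)) =
      TensorProduct.lid R A (f.rTensor A t) * TensorProduct.lid R A (e.rTensor A s) +
        TensorProduct.lid R A (e.rTensor A t) * TensorProduct.lid R A (f.rTensor A s) := by
  induction t using TensorProduct.induction_on with
  | zero => simp
  | add t t' ht ht' => simp only [add_mul, map_add, ht, ht']; abel
  | tmul a b =>
    induction s using TensorProduct.induction_on with
    | zero => simp
    | add s s' hs hs' => simp only [mul_add, map_add, hs, hs']; abel
    | tmul c d =>
      simp only [Algebra.TensorProduct.tmul_mul_tmul, LinearMap.rTensor_tmul, lid_tmul, hf,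
        add_smul, mul_smul, smul_mul_smul_comm]

variable {H : Type*}

noncomputable def downOperator [AddCommMonoid H] [Module R H] [Coalgebra R H]
    (f : H →ₗ[R] R) : H →ₗ[R] H :=
  (TensorProduct.lid R H).toLinearMap ∘ₗ f.rTensor H ∘ₗ Coalgebra.comul

theorem downOperator_apply [AddCommMonoid H] [Module R H] [Coalgebra R H] (f : H →ₗ[R] R)
    (x : H) : downOperator f x = TensorProduct.lid R H (f.rTensor H (Coalgebra.comul x)) :=
  rfl

@[simp]
theorem downOperator_counit_apply [AddCommMonoid H] [Module R H] [Coalgebra R H] (x : H) :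
    downOperator (Coalgebra.counit (R := R) (A := H)) x = x := by
  simp [downOperator_apply]

theorem IsCounitDerivation.downOperator_mul [Semiring H] [Bialgebra R H] {f : H →ₗ[R] R}
    (hf : IsCounitDerivation f) (x y : H) :
    downOperator f (x * y) = downOperator f x * y + x * downOperator f y := by
  simp [downOperator_apply, lid_rTensor_mul hf]

end CounitDerivation

section CommRing

variable {R H : Type*} [CommRing R] [Semiring H] [Bialgebra R H] {f : H →ₗ[R] R}

theorem IsCounitDerivation.map_one (hf : IsCounitDerivation f) : f 1 = 0 := by
  have h := hf 1 1
  simp only [mul_one, Bialgebra.counit_one, one_mul] at h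
  exact left_eq_add.mp h

theorem IsCounitDerivation.downOperator_eq_smul_one_of_comul_eq (hf : IsCounitDerivation f)
    {β : H} (hβ : Coalgebra.comul (R := R) β = 1 ⊗ₜ[R] β + β ⊗ₜ[R] 1) :
    downOperator f β = f β • 1 := by
  simp [downOperator_apply, hβ, hf.map_one]

end CommRing

/-- If `β` is a primitive element of a bialgebra `H` over a commutative ring `R`,
`f : H → R` is an `R`-linear ε-derivation, `U` is left multiplication by `β`, and
`D` is the down operator `D(x) = Σ f(x⁽¹⁾) x⁽²⁾`, then `D ∘ U − U ∘ D = f(β) • id`. -/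
theorem down_up_commutator_of_primitive_of_epsDerivation
    {R H : Type*} [CommRing R] [Ring H] [Bialgebra R H]
    (β : H) (hβ : Coalgebra.comul (R := R) β = 1 ⊗ₜ[R] β + β ⊗ₜ[R] 1)
    (f : H →ₗ[R] R)
    (hf : ∀ x y : H, f (x * y) =
      f x * Coalgebra.counit (R := R) y + Coalgebra.counit (R := R) x * f y)
    (U D : H →ₗ[R] H)
    (hU : ∀ x, U x = β * x)
    (hD : ∀ x, D x = (TensorProduct.lid R H)
      ((TensorProduct.map f (LinearMap.id : H →ₗ[R] H)) (Coalgebra.comul (R := R) x))) :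
    D ∘ₗ U - U ∘ₗ D = f β • (LinearMap.id : H →ₗ[R] H) := by
  have hf : IsCounitDerivation f := hf
  have hD' : D = downOperator f := LinearMap.ext hD
  have hU' : U = LinearMap.mulLeft R β := LinearMap.ext hU
  subst hD' hU'
  ext x
  simp [hf.downOperator_mul, hf.downOperator_eq_smul_one_of_comul_eq hβ]
end

section
/- Let R be a commutative ring, let H and H' be bialgebras over R, and let ⟨·,·⟩ : H' × H → R be a Hopf pairing. Let α ∈ H' and β ∈ H be primitive elements. Define R-linear maps U, D : H → H by U(x) = βx and D(x) = Σ ⟨α, x⁽¹⁾⟩ x⁽²⁾ (Sweedler notation for Δx). Then D ∘ U − U ∘ D = ⟨α, β⟩ · id_H as R-linear endomorphisms of H. -/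
/-!
For primitive `α`, the Hopf pairing makes `⟨α, ·⟩` an `ε`-derivation,
`⟨α, xy⟩ = ε(x)⟨α, y⟩ + ⟨α, x⟩ε(y)`; since `ε(β) = 0` for primitive `β`, this gives
`⟨α, βy⟩ = ⟨α, β⟩ ε(y)`. Multiplicativity of `Δ` gives `Δ(βx) = (1 ⊗ β + β ⊗ 1) Δx`: in `D(βx)`
the summand `1 ⊗ β` contributes `β D(x)`, and the summand `β ⊗ 1` contributes
`⟨α, β⟩ (ε ⊗ id) Δx = ⟨α, β⟩ x` by counitality.
-/

open TensorProduct

section Primitive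

variable (R : Type*) {A : Type*} [CommSemiring R] [Semiring A] [Bialgebra R A]

def IsPrimitive (a : A) : Prop :=
  Coalgebra.comul (R := R) a = 1 ⊗ₜ[R] a + a ⊗ₜ[R] 1

variable {R}

theorem IsPrimitive.lid_rTensor_comul_mul {a : A} (ha : IsPrimitive R a) (f : A →ₗ[R] R)
    (x : A) :
    TensorProduct.lid R A (f.rTensor A (Coalgebra.comul (a * x))) =
      a * TensorProduct.lid R A (f.rTensor A (Coalgebra.comul x)) +
        TensorProduct.lid R A ((f ∘ₗ LinearMap.mulLeft R a).rTensor A (Coalgebra.comul x)) := by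
  rw [Bialgebra.comul_mul, ha, add_mul]
  induction Coalgebra.comul (R := R) x using TensorProduct.induction_on with
  | zero => simp
  | tmul b c => simp
  | add s t hs ht =>
    simp only [mul_add, map_add] at hs ht ⊢
    rw [add_add_add_comm, hs, ht, add_add_add_comm]

end Primitive

section PrimitiveRing

variable {R A : Type*} [CommSemiring R] [Ring A] [Bialgebra R A]

theorem IsPrimitive.counit_eq_zero {a : A}
    (ha : IsPrimitive R a) : Coalgebra.counit (R := R) a = 0 := by
  have hsplit : a + Coalgebra.counit (R := R) a • (1 : A) = a := by
    have h := congrArg (TensorProduct.lid R A) (Coalgebra.rTensor_counit_comul (R := R) a)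
    rw [ha] at h
    simpa using h
  simpa using congrArg (Coalgebra.counit (R := R)) (add_eq_left.mp hsplit)

end PrimitiveRing

section HopfPairing

variable {R H' H : Type*} [CommSemiring R] [Semiring H'] [Semiring H]
  [Bialgebra R H'] [Bialgebra R H]

theorem IsPrimitive.pairing_mul (p : H' →ₗ[R] H →ₗ[R] R)
    (hmul : ∀ (a : H') (x y : H), p a (x * y) =
      (LinearMap.mul' R R) ((TensorProduct.map (p.flip x) (p.flip y)) (Coalgebra.comul (R := R) a)))
    (hone : ∀ x : H, p 1 x = Coalgebra.counit (R := R) x)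
    {α : H'} (hα : IsPrimitive R α) (x y : H) :
    p α (x * y) = Coalgebra.counit (R := R) x * p α y + p α x * Coalgebra.counit (R := R) y := by
  rw [hmul, hα]
  simp [hone, add_comm]

end HopfPairing

theorem down_up_commutator_of_hopfPairing_general
    {R H' H : Type*} [CommRing R] [Ring H'] [Ring H] [Bialgebra R H'] [Bialgebra R H]
    (p : H' →ₗ[R] H →ₗ[R] R)
    (hp2 : ∀ (a : H') (x y : H), p a (x * y) =
      (LinearMap.mul' R R) ((TensorProduct.map (p.flip x) (p.flip y)) (Coalgebra.comul (R := R) a)))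
    (hp3 : ∀ x : H, p 1 x = Coalgebra.counit (R := R) x)
    (α : H') (hα : Coalgebra.comul (R := R) α = 1 ⊗ₜ[R] α + α ⊗ₜ[R] 1)
    (β : H) (hβ : Coalgebra.comul (R := R) β = 1 ⊗ₜ[R] β + β ⊗ₜ[R] 1)
    (U D : H →ₗ[R] H)
    (hU : ∀ x, U x = β * x)
    (hD : ∀ x, D x = (TensorProduct.lid R H)
      ((TensorProduct.map (p α) (LinearMap.id : H →ₗ[R] H)) (Coalgebra.comul (R := R) x))) :
    D ∘ₗ U - U ∘ₗ D = p α β • (LinearMap.id : H →ₗ[R] H) := by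
  have hpα_mulLeft : p α ∘ₗ LinearMap.mulLeft R β = p α β • Coalgebra.counit := by
    ext y
    simp [IsPrimitive.pairing_mul p hp2 hp3 hα, IsPrimitive.counit_eq_zero hβ]
  ext x
  have hDU : D (β * x) = β * D x + p α β • x := by
    rw [hD, hD]
    rw [← LinearMap.rTensor_def, IsPrimitive.lid_rTensor_comul_mul hβ, hpα_mulLeft,
      LinearMap.rTensor_smul, LinearMap.smul_apply, map_smul,
      Coalgebra.rTensor_counit_comul, TensorProduct.lid_tmul, one_smul]
  simp only [LinearMap.sub_apply, LinearMap.comp_apply, LinearMap.smul_apply, LinearMap.id_apply,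
    hU, hDU, add_sub_cancel_left]

/-- Theorem 3.3 of the paper: if `⟨·,·⟩ : H' × H → R` is a Hopf pairing between
bialgebras and `α ∈ H'`, `β ∈ H` are primitive, then the up operator `U(x) = βx`
and the down operator `D(x) = Σ ⟨α, x⁽¹⁾⟩ x⁽²⁾` satisfy `D ∘ U − U ∘ D = ⟨α, β⟩ • id`. -/
theorem down_up_commutator_of_hopfPairing
    {R H' H : Type*} [CommRing R] [Ring H'] [Ring H] [Bialgebra R H'] [Bialgebra R H]
    (p : H' →ₗ[R] H →ₗ[R] R)
    (hp1 : ∀ (a b : H') (x : H), p (a * b) x =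
      (LinearMap.mul' R R) ((TensorProduct.map (p a) (p b)) (Coalgebra.comul (R := R) x)))
    (hp2 : ∀ (a : H') (x y : H), p a (x * y) =
      (LinearMap.mul' R R) ((TensorProduct.map (p.flip x) (p.flip y)) (Coalgebra.comul (R := R) a)))
    (hp3 : ∀ x : H, p 1 x = Coalgebra.counit (R := R) x)
    (hp4 : ∀ a : H', p a 1 = Coalgebra.counit (R := R) a)
    (α : H') (hα : Coalgebra.comul (R := R) α = 1 ⊗ₜ[R] α + α ⊗ₜ[R] 1)
    (β : H) (hβ : Coalgebra.comul (R := R) β = 1 ⊗ₜ[R] β + β ⊗ₜ[R] 1)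
    (U D : H →ₗ[R] H)
    (hU : ∀ x, U x = β * x)
    (hD : ∀ x, D x = (TensorProduct.lid R H)
      ((TensorProduct.map (p α) (LinearMap.id : H →ₗ[R] H)) (Coalgebra.comul (R := R) x))) :
    D ∘ₗ U - U ∘ₗ D = p α β • (LinearMap.id : H →ₗ[R] H) :=
  down_up_commutator_of_hopfPairing_general p hp2 hp3 α hα β hβ U D hU hD
end

section
/- Let V be a set of vertices with a height function h : V → ℕ, and let v₀ ∈ V be the unique vertex of height 0 (h(v₀) = 0 and every v with h(v) = 0 equals v₀). Let m, m' : V × V → ℕ be edge multiplicity functions such that m(v,u) ≠ 0 implies h(u) = h(v) + 1 and m'(v,u) ≠ 0 implies h(u) = h(v) + 1, and such that for every vertex v the sets {u : m(v,u) ≠ 0}, {u : m(u,v) ≠ 0}, {u : m'(v,u) ≠ 0}, {u : m'(u,v) ≠ 0} are all finite. Let r ∈ ℕ and suppose the duality relation holds: for all v, u ∈ V, Σ_w m(v,w)·m'(u,w) = Σ_w m'(w,v)·m(w,u) + (r if v = u, else 0). Let f, f' : V → ℕ be the path-count functions, i.e. f(v₀) = 1, f'(v₀) = 1, and for every v with h(v)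 ≥ 1, f(v) = Σ_u m(u,v)·f(u) and f'(v) = Σ_u m'(u,v)·f'(u). Then for every n ≥ 0, the sum Σ over {v : h(v) = n} of f(v)·f'(v) (a sum with finite support) equals rⁿ · n!. -/
/-!
Let `U` send a vertex `v` to `∑ u, m v u • u` and `D` send `v` to `∑ u, m' u v • u`, as operators
on finitely supported `ℕ`-combinations of vertices. Duality says `D * U = U * D + r`, which by
induction gives `D * U ^ (n + 1) = U ^ (n + 1) * D + (n + 1) r U ^ n`. Since `D v₀ = 0`, this
yields `D ^ n (U ^ n v₀) = rⁿ n! v₀`. On the other hand `U ^ n v₀ = ∑_{h v = n} f v • v` and the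
`v₀`-coefficient of `D ^ n v` is `f' v`, so the `v₀`-coefficient of `D ^ n (U ^ n v₀)` is
`∑_{h v = n} f v * f' v`.
-/

open scoped Classical

theorem LinearMap.finsupp_apply_eq_finsum {R V W : Type*} [Semiring R]
    (φ : (V →₀ R) →ₗ[R] (W →₀ R)) (x : V →₀ R) (u : W) :
    φ x u = ∑ᶠ v, x v * φ (Finsupp.single v 1) u := by
  have hterm (v : V) : φ (Finsupp.single v (x v)) u = x v * φ (Finsupp.single v 1) u := by
    rw [← Finsupp.smul_single_one, map_smul, Finsupp.smul_apply, smul_eq_mul]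
  conv_lhs => rw [← x.sum_single]
  rw [map_finsuppSum, Finsupp.sum_apply, Finsupp.sum, Finset.sum_congr rfl fun v _ => hterm v]
  refine (finsum_eq_sum_of_support_subset _ fun v hv => ?_).symm
  exact Finsupp.mem_support_iff.2 (left_ne_zero_of_mul hv)

theorem mul_pow_succ_eq_of_mul_eq_add {A : Type*} [Semiring A] {D U : A} {c : ℕ}
    (hDU : D * U = U * D + c) (n : ℕ) :
    D * U ^ (n + 1) = U ^ (n + 1) * D + ((n + 1) * c : ℕ) * U ^ n := by
  induction n with
  | zero => simpa using hDU
  | succ n ih =>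
    calc D * U ^ (n + 2) = (D * U ^ (n + 1)) * U := by rw [pow_succ, mul_assoc]
      _ = U ^ (n + 1) * (D * U) + ((n + 1) * c : ℕ) * U ^ (n + 1) := by
        rw [ih, add_mul, mul_assoc, mul_assoc, ← pow_succ]
      _ = U ^ (n + 2) * D + ((n + 2) * c : ℕ) * U ^ (n + 1) := by
        rw [hDU, mul_add, ← mul_assoc, ← pow_succ, ← (Nat.cast_commute c _).eq, add_assoc,
          ← add_mul, ← Nat.cast_add]
        congr 3
        ring

theorem pow_mul_pow_smul_of_mul_eq_add {A M : Type*} [Semiring A] [AddCommMonoid M]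
    [Module A M] {D U : A} {c : ℕ} (hDU : D * U = U * D + c) {x : M} (hx : D • x = 0)
    (n : ℕ) : (D ^ n * U ^ n) • x = (c ^ n * n.factorial) • x := by
  induction n with
  | zero => simp
  | succ n ih =>
    calc (D ^ (n + 1) * U ^ (n + 1)) • x = D ^ n • (D * U ^ (n + 1)) • x := by
          rw [pow_succ, mul_assoc, mul_smul]
      _ = ((n + 1) * c) • (D ^ n * U ^ n) • x := by
        rw [mul_pow_succ_eq_of_mul_eq_add hDU, add_smul, mul_smul, hx, smul_zero, zero_add,
          mul_smul, Nat.cast_smul_eq_nsmul, smul_comm, ← mul_smul]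
      _ = (c ^ (n + 1) * (n + 1).factorial) • x := by
        rw [ih, smul_smul, Nat.factorial_succ, pow_succ]
        congr 1
        ring

noncomputable def edgeOp {V : Type*} (a : V → V → ℕ) (ha : ∀ v, {u | a v u ≠ 0}.Finite) :
    Module.End ℕ (V →₀ ℕ) :=
  Finsupp.linearCombination ℕ fun v => Finsupp.ofSupportFinite (a v) (ha v)

section EdgeOp

variable {V : Type*} {a : V → V → ℕ} (ha : ∀ v, {u | a v u ≠ 0}.Finite)

theorem edgeOp_single_apply (v u : V) : edgeOp a ha (Finsupp.single v 1) u = a v u := by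
  simp only [edgeOp, Finsupp.linearCombination_single, one_smul]
  rfl

theorem edgeOp_apply (x : V →₀ ℕ) (u : V) : edgeOp a ha x u = ∑ᶠ v, x v * a v u := by
  rw [LinearMap.finsupp_apply_eq_finsum]
  simp only [edgeOp_single_apply]

theorem edgeOp_single_eq_zero {v : V} (hv : ∀ u, a v u = 0) :
    edgeOp a ha (Finsupp.single v 1) = 0 := by
  ext u
  simp [edgeOp_single_apply, hv]

theorem edgeOp_mul_edgeOp_eq_add {b : V → V → ℕ} (hb : ∀ v, {u | b v u ≠ 0}.Finite) {r : ℕ}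
    (hab : ∀ v u, ∑ᶠ w, a v w * b w u = (∑ᶠ w, b v w * a w u) + if v = u then r else 0) :
    edgeOp b hb * edgeOp a ha = edgeOp a ha * edgeOp b hb + r := by
  ext v u
  simp only [LinearMap.coe_comp, Function.comp_apply, Finsupp.lsingle_apply,
    LinearMap.add_apply, Module.End.mul_apply, Module.End.natCast_apply, Finsupp.add_apply,
    Finsupp.smul_apply]
  rw [edgeOp_apply, edgeOp_apply]
  simp only [edgeOp_single_apply, hab, Finsupp.single_apply, smul_eq_mul, mul_ite, mul_one,
    mul_zero]

end EdgeOp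

theorem eq_ite_height_of_recursion {V : Type*} {h : V → ℕ} {v₀ : V} (hv₀ : h v₀ = 0)
    (hv₀uniq : ∀ v, h v = 0 → v = v₀) {a : V → V → ℕ} (ha : ∀ v u, a v u ≠ 0 → h u = h v + 1)
    {f : V → ℕ} (hf0 : f v₀ = 1) (hf : ∀ v, 1 ≤ h v → f v = ∑ᶠ u, a u v * f u)
    {F : ℕ → V → ℕ} (hF0 : ∀ v, F 0 v = if v = v₀ then 1 else 0)
    (hF : ∀ n v, F (n + 1) v = ∑ᶠ u, a u v * F n u) (n : ℕ) (v : V) :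
    F n v = if h v = n then f v else 0 := by
  induction n generalizing v with
  | zero =>
    rw [hF0]
    by_cases hv : v = v₀
    · simp [hv, hv₀, hf0]
    · simp [hv, mt (hv₀uniq v) hv]
  | succ n ih =>
    have hterm (u : V) : a u v * F n u = if h v = n + 1 then a u v * f u else 0 := by
      by_cases hu : a u v = 0
      · simp [hu]
      · simp [ih, ha u v hu]
    split_ifs with hv
    · simp only [hF, hterm, hv, if_true, hf v (by omega)]
    · simp [hF, hterm, hv]

theorem fomin_path_counting_general
    {V : Type*} (h : V → ℕ) (v₀ : V)
    (hv₀ : h v₀ = 0) (hv₀uniq : ∀ v, h v = 0 → v = v₀)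
    (m m' : V → V → ℕ)
    (hm : ∀ v u, m v u ≠ 0 → h u = h v + 1)
    (hm' : ∀ v u, m' v u ≠ 0 → h u = h v + 1)
    (hfin1 : ∀ v, {u | m v u ≠ 0}.Finite)
    (hfin4 : ∀ v, {u | m' u v ≠ 0}.Finite)
    (r : ℕ)
    (hdual : ∀ v u, ∑ᶠ w, m v w * m' u w =
      (∑ᶠ w, m' w v * m w u) + (if v = u then r else 0))
    (f f' : V → ℕ)
    (hf0 : f v₀ = 1) (hf'0 : f' v₀ = 1)
    (hf : ∀ v, 1 ≤ h v → f v = ∑ᶠ u, m u v * f u)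
    (hf' : ∀ v, 1 ≤ h v → f' v = ∑ᶠ u, m' u v * f' u) :
    ∀ n : ℕ, {v | h v = n ∧ f v * f' v ≠ 0}.Finite ∧
      ∑ᶠ v ∈ {v | h v = n}, f v * f' v = r ^ n * n.factorial := by
  set U := edgeOp m hfin1 with hU
  set D := edgeOp (fun v u => m' u v) hfin4 with hD
  set x₀ : V →₀ ℕ := Finsupp.single v₀ 1
  have hDU : D * U = U * D + r := edgeOp_mul_edgeOp_eq_add hfin1 hfin4 hdual
  have hDx₀ : D x₀ = 0 := edgeOp_single_eq_zero hfin4 fun u => by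
    by_contra hu
    have := hm' u v₀ hu
    omega
  have hUf (n : ℕ) (v : V) : (U ^ n) x₀ v = if h v = n then f v else 0 := by
    refine eq_ite_height_of_recursion hv₀ hv₀uniq hm hf0 hf
      (F := fun n v => (U ^ n) x₀ v) (by simp [x₀, Finsupp.single_apply, eq_comm]) ?_ n v
    intro n v
    rw [pow_succ', Module.End.mul_apply, hU, edgeOp_apply]
    simp only [mul_comm]
  have hDf' (n : ℕ) (v : V) :
      (D ^ n) (Finsupp.single v 1) v₀ = if h v = n then f' v else 0 := by
    refine eq_ite_height_of_recursion hv₀ hv₀uniq hm' hf'0 hf'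
      (F := fun n v => (D ^ n) (Finsupp.single v 1) v₀) (by simp [Finsupp.single_apply]) ?_ n v
    intro n v
    rw [pow_succ, Module.End.mul_apply, LinearMap.finsupp_apply_eq_finsum, hD]
    simp only [edgeOp_single_apply]
  intro n
  constructor
  · refine ((U ^ n) x₀).support.finite_toSet.subset fun v ⟨hv, hff'⟩ => ?_
    simpa [hUf, hv] using left_ne_zero_of_mul hff'
  · calc ∑ᶠ v ∈ {v | h v = n}, f v * f' v
        = ∑ᶠ v, (U ^ n) x₀ v * (D ^ n) (Finsupp.single v 1) v₀ := by
          rw [finsum_mem_def]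
          refine finsum_congr fun v => ?_
          simp only [Set.indicator_apply, Set.mem_ofPred_eq, hUf, hDf', ite_zero_mul_ite_zero,
            and_self]
      _ = (D ^ n * U ^ n) x₀ v₀ := (LinearMap.finsupp_apply_eq_finsum _ _ _).symm
      _ = r ^ n * n.factorial := by
          rw [← Module.End.smul_def, pow_mul_pow_smul_of_mul_eq_add hDU hDx₀]
          simp [x₀]

/-- Fomin's theorem (Theorem 3.1 of the paper): for a pair of dual graded graphs
with differential coefficient `r`, the number of pairs of paths satisfies
`Σ_{h(v)=n} f^v_Γ f^v_{Γ'} = rⁿ n!`; moreover each such sum has finite support. -/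
theorem fomin_path_counting
    {V : Type*} (h : V → ℕ) (v₀ : V)
    (hv₀ : h v₀ = 0) (hv₀uniq : ∀ v, h v = 0 → v = v₀)
    (m m' : V → V → ℕ)
    (hm : ∀ v u, m v u ≠ 0 → h u = h v + 1)
    (hm' : ∀ v u, m' v u ≠ 0 → h u = h v + 1)
    (hfin1 : ∀ v, {u | m v u ≠ 0}.Finite)
    (hfin2 : ∀ v, {u | m u v ≠ 0}.Finite)
    (hfin3 : ∀ v, {u | m' v u ≠ 0}.Finite)
    (hfin4 : ∀ v, {u | m' u v ≠ 0}.Finite)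
    (r : ℕ)
    (hdual : ∀ v u, ∑ᶠ w, m v w * m' u w =
      (∑ᶠ w, m' w v * m w u) + (if v = u then r else 0))
    (f f' : V → ℕ)
    (hf0 : f v₀ = 1) (hf'0 : f' v₀ = 1)
    (hf : ∀ v, 1 ≤ h v → f v = ∑ᶠ u, m u v * f u)
    (hf' : ∀ v, 1 ≤ h v → f' v = ∑ᶠ u, m' u v * f' u) :
    ∀ n : ℕ, {v | h v = n ∧ f v * f' v ≠ 0}.Finite ∧
      ∑ᶠ v ∈ {v | h v = n}, f v * f' v = r ^ n * n.factorial :=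
  fomin_path_counting_general h v₀ hv₀ hv₀uniq m m' hm hm' hfin1 hfin4 r hdual f f' hf0 hf'0 hf hf'
end
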